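/- Let c ∈ (0, 1), a > 1, and define f : ℝ → ℝ by f(h) = (1 − c)·h + c·tanh(a·h) (zero input), and let h* be the unique solution of tanh(a·h) = h in (0, ∞). Then: if h₀ > 0 the iterates f^[n](h₀) converge to h*; if h₀ < 0 the iterates converge to −h*; and if h₀ = 0 then f^[n](0) = 0 for all n. Hence the sign of the initial state is encoded in persistent memory: trajectories converge to one of two distinct stable equilibria depending on the sign of h₀. -/

import Mathlib

/-!
The update map `f` is monotone, odd and continuous, and its fixed points are the solutions of
`tanh (a h) = h`. Because `a > 1`, `tanh (a h) - h` is positive just to the right of `0`, so by the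
intermediate value theorem it is positive on `(0, h*)` and negative on `(h*, ∞)`. Hence `f` pushes
every point of `(0, h*)` up and every point of `(h*, ∞)` down, without ever crossing `h*`: the orbit
is monotone and bounded, and its limit is a positive fixed point, i.e. `h*`. Oddness transfers this
to negative initial states.
-/

open Filter Set Function Topology

namespace Real

theorem hasDerivAt_tanh (x : ℝ) : HasDerivAt tanh (cosh x ^ 2)⁻¹ x := by
  have h := (hasDerivAt_sinh x).div (hasDerivAt_cosh x) (cosh_pos x).ne'
  rw [← sq, ← sq, cosh_sq_sub_sinh_sq, one_div] at h
  exact h.congr_of_eventuallyEq (Eventually.of_forall tanh_eq_sinh_div_cosh)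

@[fun_prop]
theorem continuous_tanh : Continuous tanh :=
  continuous_iff_continuousAt.2 fun x => (hasDerivAt_tanh x).continuousAt

theorem tanh_strictMono : StrictMono tanh :=
  strictMono_of_deriv_pos fun x => by rw [(hasDerivAt_tanh x).deriv]; positivity

theorem eventually_lt_tanh_mul {a : ℝ} (ha : 1 < a) : ∀ᶠ h in 𝓝[>] 0, h < tanh (a * h) := by
  have hderiv : HasDerivAt (fun h => tanh (a * h) - h) (a - 1) 0 := by
    have hlin : HasDerivAt (fun h => a * h) a 0 := by simpa using (hasDerivAt_id 0).const_mul a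
    have htanh : HasDerivAt (fun h => tanh (a * h)) ((cosh (a * 0) ^ 2)⁻¹ * a) 0 :=
      (hasDerivAt_tanh (a * 0)).comp 0 hlin
    exact (htanh.sub (hasDerivAt_id' 0)).congr_deriv (by simp)
  have hsign := eventually_nhdsWithin_sign_eq_of_deriv_pos
    (hderiv.deriv ▸ sub_pos.2 ha) (by simp)
  filter_upwards [nhdsWithin_le_nhds hsign, self_mem_nhdsWithin] with h hh (h0 : 0 < h)
  rwa [sub_zero, sign_pos h0, sign_eq_one_iff, sub_pos] at hh

end Real

open Real

theorem ContinuousOn.lt_iff_lt_of_forall_ne {α δ : Type*} [ConditionallyCompleteLinearOrder α]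
    [TopologicalSpace α] [OrderTopology α] [DenselyOrdered α] [LinearOrder δ]
    [TopologicalSpace δ] [OrderClosedTopology δ] {g : α → δ} {s t : α} {v : δ} (hst : s ≤ t)
    (hg : ContinuousOn g (Icc s t)) (hne : ∀ y ∈ Icc s t, g y ≠ v) : v < g s ↔ v < g t := by
  constructor
  · intro hs
    by_contra! ht
    obtain ⟨y, hy, hyv⟩ := intermediate_value_Icc' hst hg ⟨ht, hs.le⟩
    exact hne y hy hyv
  · intro ht
    by_contra! hs
    obtain ⟨y, hy, hyv⟩ := intermediate_value_Icc hst hg ⟨hs, ht.le⟩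
    exact hne y hy hyv

section UniquePositiveFixedPoint

variable {a p x : ℝ}

theorem lt_tanh_mul_of_lt (huniq : ∀ h, 0 < h → tanh (a * h) = h → h = p) (ha : 1 < a)
    (hx0 : 0 < x) (hxp : x < p) : x < tanh (a * x) := by
  obtain ⟨t, ht, htx⟩ := ((eventually_lt_tanh_mul ha).and (Ioo_mem_nhdsGT hx0)).exists
  have hne : ∀ y ∈ Icc t x, tanh (a * y) - y ≠ 0 := fun y hy hy0 =>
    (hy.2.trans_lt hxp).ne (huniq y (htx.1.trans_le hy.1) (sub_eq_zero.1 hy0))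
  exact sub_pos.1 <| (ContinuousOn.lt_iff_lt_of_forall_ne htx.2.le (by fun_prop) hne).1
    (sub_pos.2 ht)

theorem tanh_mul_lt_of_lt (huniq : ∀ h, 0 < h → tanh (a * h) = h → h = p) (hp : 0 < p)
    (hpx : p < x) : tanh (a * x) < x := by
  have hne : ∀ y ∈ Icc x (max x 1), tanh (a * y) - y ≠ 0 := fun y hy hy0 =>
    (hpx.trans_le hy.1).ne' (huniq y (hp.trans (hpx.trans_le hy.1)) (sub_eq_zero.1 hy0))
  have hfar : ¬ 0 < tanh (a * max x 1) - max x 1 := by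
    linarith [tanh_lt_one (a * max x 1), le_max_right x 1]
  have hnear := (ContinuousOn.lt_iff_lt_of_forall_ne (le_max_left x 1) (by fun_prop) hne).not.2
    hfar
  exact sub_neg.1 <| (not_lt.1 hnear).lt_of_ne (hne x ⟨le_rfl, le_max_left x 1⟩)

end UniquePositiveFixedPoint

section IterateConvergence

variable {α : Type*} [ConditionallyCompleteLinearOrder α] [TopologicalSpace α] [OrderTopology α]
  {f : α → α} {x p : α}

theorem Monotone.tendsto_iterate_of_le_map (hf : Monotone f) (hcont : Continuous f)
    (hx : x ≤ f x) (hxp : x ≤ p) (hp : IsFixedPt f p)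
    (huniq : ∀ y ∈ Icc x p, IsFixedPt f y → y = p) :
    Tendsto (fun n => f^[n] x) atTop (𝓝 p) := by
  have hle : ∀ n, f^[n] x ≤ p := fun n => iterate_fixed hp n ▸ hf.iterate n hxp
  have hbdd : BddAbove (range fun n => f^[n] x) := ⟨p, forall_mem_range.2 hle⟩
  have hlim := tendsto_atTop_ciSup (hf.monotone_iterate_of_le_map hx) hbdd
  have hsup : ⨆ n, f^[n] x = p :=
    huniq _ ⟨le_ciSup hbdd 0, ciSup_le hle⟩ (isFixedPt_of_tendsto_iterate hlim hcont.continuousAt)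
  rwa [hsup] at hlim

theorem Monotone.tendsto_iterate_of_map_le (hf : Monotone f) (hcont : Continuous f)
    (hx : f x ≤ x) (hpx : p ≤ x) (hp : IsFixedPt f p)
    (huniq : ∀ y ∈ Icc p x, IsFixedPt f y → y = p) :
    Tendsto (fun n => f^[n] x) atTop (𝓝 p) :=
  hf.dual.tendsto_iterate_of_le_map (α := αᵒᵈ) hcont hx hpx hp fun y hy => huniq y ⟨hy.2, hy.1⟩

end IterateConvergence

noncomputable def updateMap (c a h : ℝ) : ℝ := (1 - c) * h + c * tanh (a * h)

section UpdateMap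

variable {c a h : ℝ}

theorem updateMap_sub_self : updateMap c a h - h = c * (tanh (a * h) - h) := by
  unfold updateMap; ring

theorem self_le_updateMap (hc : 0 ≤ c) (hh : h ≤ tanh (a * h)) : h ≤ updateMap c a h := by
  nlinarith [updateMap_sub_self (c := c) (a := a) (h := h)]

theorem updateMap_le_self (hc : 0 ≤ c) (hh : tanh (a * h) ≤ h) : updateMap c a h ≤ h := by
  nlinarith [updateMap_sub_self (c := c) (a := a) (h := h)]

theorem isFixedPt_updateMap_iff (hc : c ≠ 0) : IsFixedPt (updateMap c a) h ↔ tanh (a * h) = h := by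
  rw [IsFixedPt, ← sub_eq_zero, updateMap_sub_self, mul_eq_zero, sub_eq_zero, or_iff_right hc]

theorem monotone_updateMap (hc0 : 0 ≤ c) (hc1 : c ≤ 1) (ha : 0 ≤ a) : Monotone (updateMap c a) :=
  fun _ _ hxy => add_le_add (mul_le_mul_of_nonneg_left hxy (sub_nonneg.2 hc1))
    (mul_le_mul_of_nonneg_left (tanh_strictMono.monotone (mul_le_mul_of_nonneg_left hxy ha)) hc0)

theorem continuous_updateMap : Continuous (updateMap c a) := by
  unfold updateMap; fun_prop

theorem updateMap_zero : updateMap c a 0 = 0 := by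
  simp [updateMap]

theorem iterate_updateMap_neg (n : ℕ) : (updateMap c a)^[n] (-h) = -(updateMap c a)^[n] h :=
  Commute.iterate_left (f := updateMap c a) (g := Neg.neg)
    (fun h => by simp only [updateMap, mul_neg, tanh_neg]; ring) n h

end UpdateMap

theorem bistable_persistent_memory (c a : ℝ) (hc0 : 0 < c) (hc1 : c < 1) (ha : 1 < a)
    (f : ℝ → ℝ) (hf : ∀ h, f h = (1 - c) * h + c * Real.tanh (a * h))
    (hstar : ℝ) (hpos : 0 < hstar) (hfix : Real.tanh (a * hstar) = hstar)
    (huniq : ∀ h, 0 < h → Real.tanh (a * h) = h → h = hstar) :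
    (∀ h0, 0 < h0 → Tendsto (fun n => f^[n] h0) atTop (nhds hstar)) ∧
    (∀ h0, h0 < 0 → Tendsto (fun n => f^[n] h0) atTop (nhds (-hstar))) ∧
    (∀ n, f^[n] 0 = 0) := by
  obtain rfl : f = updateMap c a := funext hf
  have hmono := monotone_updateMap hc0.le hc1.le (zero_le_one.trans ha.le)
  have hp : IsFixedPt (updateMap c a) hstar := (isFixedPt_updateMap_iff hc0.ne').2 hfix
  have hfixed : ∀ y, 0 < y → IsFixedPt (updateMap c a) y → y = hstar := fun y hy hyf =>
    huniq y hy ((isFixedPt_updateMap_iff hc0.ne').1 hyf)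
  have hconv : ∀ h0, 0 < h0 → Tendsto (fun n => (updateMap c a)^[n] h0) atTop (𝓝 hstar) := by
    intro h0 hh0
    rcases lt_trichotomy h0 hstar with hlt | rfl | hgt
    · exact hmono.tendsto_iterate_of_le_map continuous_updateMap
        (self_le_updateMap hc0.le (lt_tanh_mul_of_lt huniq ha hh0 hlt).le) hlt.le hp
        fun y hy => hfixed y (hh0.trans_le hy.1)
    · simpa only [iterate_fixed hp] using tendsto_const_nhds
    · exact hmono.tendsto_iterate_of_map_le continuous_updateMap
        (updateMap_le_self hc0.le (tanh_mul_lt_of_lt huniq hpos hgt).le) hgt.le hp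
        fun y hy => hfixed y (hpos.trans_le hy.1)
  refine ⟨hconv, fun h0 hh0 => ?_, iterate_fixed updateMap_zero⟩
  refine (hconv (-h0) (neg_pos.2 hh0)).neg.congr fun n => ?_
  rw [iterate_updateMap_neg, neg_neg]
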